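/- arXiv:1905.06087 — 2 statements merged into one kernel-verified Lean document; each statement's English description precedes it below -/
import Mathlib

section
/- Suppose each correct process i either remains silent (if its local fact φ_i holds) or sends a message to every process (if φ_i fails). If some process j receives no messages at all in this round, then for every run r' that is indistinguishable to j from the actual run r (i.e., j has the same local state in r and r'), the conjunction of φ_i over all correct processes i holds in r'. In particular, j knows the global fact ⋀_{correct i} φ_i. -/
/-- Silent confirmation round theorem. A system is a set `R` of runs; each process
has a local state at time `m+1` given by `state`. `sends i j r` means that `i` sends
a message to `j` in round `m+1` of run `r`; `recv j i r` means `j` receives a round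
`m+1` message from `i` in `r`. Assuming
(1) every correct `i` whose local fact `φ i` fails at time `m` sends messages to everyone,
(2) receiving no round `m+1` messages is reflected in the local state, and
(3) messages sent by correct processes are received,
if `j` receives no messages whatsoever in round `m+1` of run `r ∈ R`, then `j` knows
the conjunction of `φ i` over all correct `i`: this conjunction holds in every run
`r' ∈ R` indistinguishable to `j` from `r`. -/
theorem silent_confirmation_round
    {Run Proc State : Type*}
    (R : Set Run) (state : Proc → Run → State)
    (correct : Proc → Prop)
    (φ : Proc → Run → Prop)
    (sends recv : Proc → Proc → Run → Prop)
    (j : Proc) (r : Run) (hr : r ∈ R)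
    (h1 : ∀ r' ∈ R, ∀ i, correct i → ¬ φ i r' → ∀ k, sends i k r')
    (h2 : ∀ r' ∈ R, (∀ i, ¬ recv i j r) → state j r = state j r' →
            ∀ i, ¬ recv i j r')
    (h3 : ∀ r' ∈ R, ∀ i, correct i → sends i j r' → recv i j r')
    (hsilent : ∀ i, ¬ recv i j r) :
    ∀ r' ∈ R, state j r' = state j r → ∀ i, correct i → φ i r' := by
  intro r' hr' hst i hi
  by_contra h
  exact h2 r' hr' hsilent hst.symm i (h3 r' hr' i hi (h1 r' hr' i hi h j))
end

section
/- Agreement safety in L1: if some correct process i receives at most t 'err' messages (and so decides 1 at time 1), then every correct process receives at most 2t 'err' messages (and so sets its estimate to 1). -/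
/-- Agreement safety in `L₁`: every correct process that sends an `err` message
sends it to all correct processes, so for correct receivers `i` and `j` the sets
`C i` and `C j` of `err` senders can differ only on faulty senders (of which there
are at most `t`). Hence if some correct process `i` receives at most `t` `err`
messages, every correct process `j` receives at most `2t` of them. -/
theorem L1_agreement_safety {ι : Type*} [DecidableEq ι] [Fintype ι]
    (t : ℕ) (F : Finset ι) (C : ι → Finset ι)
    (hF : F.card ≤ t)
    (hbcast : ∀ s : ι, s ∉ F → ∀ i j : ι, i ∉ F → j ∉ F → (s ∈ C i ↔ s ∈ C j)) :
    ∀ i : ι, i ∉ F → (C i).card ≤ t → ∀ j : ι, j ∉ F → (C j).card ≤ 2 * t := by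
  intro i hi hci j hj
  have hsub : C j ⊆ C i ∪ F := by
    intro s hs
    by_cases hsF : s ∈ F
    · exact Finset.mem_union_right _ hsF
    · exact Finset.mem_union_left _ (((hbcast s hsF i j hi hj).mpr hs))
  calc (C j).card ≤ (C i ∪ F).card := Finset.card_le_card hsub
    _ ≤ (C i).card + F.card := Finset.card_union_le _ _
    _ ≤ t + t := Nat.add_le_add hci hF
    _ = 2 * t := (two_mul t).symm
end
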